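/- Let 0 < α ≤ β < 1. Then there is a function e(ρ) with e(ρ) = o(ρ) as ρ → 0⁺ such that for all small ρ > 0: 2 − log(1−ρ) − max over d ∈ [h⁻¹(β)−h⁻¹(α), h⁻¹(β)+h⁻¹(α)] of ( w_d(α,β) + d·log((1+ρ)/(1−ρ)) ) ≥ (1−α) + (1−β) + ρ·log(e)·(1 − 2·(h⁻¹(α) * h⁻¹(β))) + e(ρ). -/

import Mathlib

open Finset Asymptotics Filter

/-- Binary entropy function (base-2 logarithms). -/
noncomputable def binEnt (p : ℝ) : ℝ :=
  -(p * Real.logb 2 p) - (1 - p) * Real.logb 2 (1 - p)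

/-- Inverse of the binary entropy function restricted to `[0, 1/2]`. -/
noncomputable def binEntInv (x : ℝ) : ℝ :=
  sSup {p : ℝ | p ∈ Set.Icc (0:ℝ) (1/2) ∧ binEnt p ≤ x}

/-- `p*q = p(1-q) + q(1-p)`. -/
def pstar (p q : ℝ) : ℝ := p * (1 - q) + q * (1 - p)

/-- Probability of the rectangle `A × B` for `ρ`-correlated uniform binary strings. -/
noncomputable def Pxy (n : ℕ) (ρ : ℝ) (A B : Finset (Fin n → Bool)) : ℝ :=
  ∑ a ∈ A, ∑ b ∈ B,
    (2:ℝ)⁻¹ ^ n * ((1 + ρ)/2) ^ n * ((1 - ρ)/(1 + ρ)) ^ (hammingDist a b)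

/-- Hamming sphere of radius `j` around the all-zeros string in `{0,1}^n`. -/
def hSphere (n j : ℕ) : Finset (Fin n → Bool) :=
  Finset.univ.filter (fun x => (Finset.univ.filter (fun i => x i = true)).card = j)

/-- The exponent function `w_d(α,β)`. -/
noncomputable def wd (α β d : ℝ) : ℝ :=
  α + binEntInv α * binEnt (1/2 + (binEntInv β - d)/(2 * binEntInv α))
    + (1 - binEntInv α) * binEnt (1/2 + (d - (1 - binEntInv β))/(2 * (1 - binEntInv α)))

/-- The noise operator `T_ρ`. -/
noncomputable def Tnoise (n : ℕ) (ρ : ℝ) (f : (Fin n → Bool) → ℝ) (y : Fin n → Bool) : ℝ :=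
  ∑ x : Fin n → Bool,
    f x * ((1 + ρ)/2) ^ (n - hammingDist x y) * ((1 - ρ)/2) ^ (hammingDist x y)

/-- The normalized `p`-norm on functions on the hypercube. -/
noncomputable def pNorm (n : ℕ) (p : ℝ) (f : (Fin n → Bool) → ℝ) : ℝ :=
  ((2:ℝ)⁻¹ ^ n * ∑ x : Fin n → Bool, |f x| ^ p) ^ (1/p)

/-- Indicator function of a set `A ⊆ {0,1}^n`. -/
def indA (n : ℕ) (A : Finset (Fin n → Bool)) : (Fin n → Bool) → ℝ :=
  fun x => if x ∈ A then 1 else 0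

/-!
Write `a = h⁻¹(α)`, `b = h⁻¹(β)`. The entropy part of `w_d(α,β)` is `a h(u) + (1 - a) h(v)`
with `a u + (1 - a) v = b` and `u - v = (a*b - d) / (2a(1 - a))`. As `h` is `(4 / ln 2)`-strongly
concave, this is at most `h(b) - (2 / ln 2)(d - a*b)² ≤ β - (2 / ln 2)(d - a*b)²`, and completing
the square in `d` bounds the maximum by `α + β + (a*b) t + (ln 2 / 8) t²` for
`t = log ((1 + ρ)/(1 - ρ))`. Since `t = 2ρ / ln 2 + O(ρ²)` and `-log (1 - ρ) = ρ / ln 2 + O(ρ²)`,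
the claim holds with `e(ρ) = -(2 / ln 2) ρ²`.
-/

open Real

lemma binEnt_eq_binEntropy_div (p : ℝ) : binEnt p = binEntropy p / log 2 := by
  rw [binEnt, binEntropy, log_inv, log_inv, logb, logb]
  ring

lemma binEnt_zero : binEnt 0 = 0 := by simp [binEnt]

lemma continuous_binEnt : Continuous binEnt := by
  simpa only [funext binEnt_eq_binEntropy_div] using binEntropy_continuous.div_const (log 2)

lemma strongConcaveOn_binEntropy : StrongConcaveOn (Set.Icc 0 1) 4 binEntropy := by
  have hint : ∀ x ∈ interior (Set.Icc (0 : ℝ) 1), 0 < x ∧ 0 < 1 - x := fun x hx => by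
    rw [interior_Icc] at hx
    exact ⟨hx.1, by linarith [hx.2]⟩
  rw [strongConcaveOn_iff_convex]
  simp only [norm_eq_abs, sq_abs]
  refine concaveOn_of_hasDerivWithinAt2_nonpos (convex_Icc 0 1) (by fun_prop)
    (f' := fun p => log (1 - p) - log p + 4 * p) (f'' := fun p => -(1 - p)⁻¹ - p⁻¹ + 4)
    (fun x hx => ?_) (fun x hx => ?_) (fun x hx => ?_)
  · obtain ⟨hx0, hx1⟩ := hint x hx
    refine HasDerivAt.hasDerivWithinAt ?_
    exact ((hasDerivAt_binEntropy hx0.ne' (by linarith)).add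
      ((hasDerivAt_pow 2 x).const_mul (4 / 2))).congr_deriv (by ring)
  · obtain ⟨hx0, hx1⟩ := hint x hx
    refine HasDerivAt.hasDerivWithinAt ?_
    exact (((((hasDerivAt_id x).const_sub 1).log hx1.ne').sub ((hasDerivAt_id x).log hx0.ne')).add
      ((hasDerivAt_id x).const_mul 4)).congr_deriv (by simp only [id]; ring)
  · obtain ⟨hx0, hx1⟩ := hint x hx
    have h : 4 ≤ x⁻¹ + (1 - x)⁻¹ := by
      rw [inv_add_inv hx0.ne' hx1.ne', le_div_iff₀ (by positivity)]
      nlinarith [sq_nonneg (2 * x - 1)]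
    linarith

lemma strongConcaveOn_binEnt : StrongConcaveOn (Set.Icc 0 1) (4 / log 2) binEnt := by
  refine ⟨convex_Icc 0 1, fun x hx y hy a b ha hb hab => ?_⟩
  have h := strongConcaveOn_binEntropy.2 hx hy ha hb hab
  simp only [smul_eq_mul, binEnt_eq_binEntropy_div] at h ⊢
  calc _ = (a * binEntropy x + b * binEntropy y + a * b * (4 / 2 * ‖x - y‖ ^ 2)) / log 2 := by
        ring
    _ ≤ _ := div_le_div_of_nonneg_right h (log_pos one_lt_two).le

section binEntInv

variable {x y : ℝ}

lemma binEntInv_mem (hx : 0 ≤ x) :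
    binEntInv x ∈ Set.Icc 0 (1 / 2) ∧ binEnt (binEntInv x) ≤ x :=
  (isClosed_Icc.inter (isClosed_Iic.preimage continuous_binEnt)).csSup_mem
    ⟨0, by norm_num [binEnt_zero, hx]⟩ ⟨1 / 2, fun _ hp => hp.1.2⟩

lemma binEntInv_mono (hx : 0 ≤ x) (hxy : x ≤ y) : binEntInv x ≤ binEntInv y :=
  csSup_le_csSup ⟨1 / 2, fun _ hp => hp.1.2⟩ ⟨0, by norm_num [binEnt_zero, hx]⟩
    fun _ hp => ⟨hp.1, hp.2.trans hxy⟩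

lemma binEntInv_pos (hx : 0 < x) : 0 < binEntInv x := by
  have hsmall : ∀ᶠ p in nhdsWithin (0 : ℝ) (Set.Ioi 0), (binEnt p < x ∧ p < 1 / 2) ∧ 0 < p := by
    refine Eventually.and (nhdsWithin_le_nhds ?_) self_mem_nhdsWithin
    exact ((continuous_binEnt.tendsto' 0 0 binEnt_zero).eventually_lt_const hx).and
      (Iio_mem_nhds (by norm_num))
  obtain ⟨p, ⟨hpx, hp2⟩, hp0⟩ := hsmall.exists
  exact hp0.trans_le (le_csSup ⟨1 / 2, fun _ hq => hq.1.2⟩ ⟨⟨hp0.le, hp2.le⟩, hpx.le⟩)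

end binEntInv

lemma pstar_mem_Icc {p q : ℝ} (hp : p ∈ Set.Icc 0 1) (hq : q ∈ Set.Icc 0 1) :
    pstar p q ∈ Set.Icc 0 1 := by
  obtain ⟨hp0, hp1⟩ := hp
  obtain ⟨hq0, hq1⟩ := hq
  constructor <;> unfold pstar <;>
    nlinarith [mul_nonneg hp0 hq0, mul_nonneg (sub_nonneg.2 hp1) (sub_nonneg.2 hq1)]

lemma mul_binEnt_add_one_sub_mul_binEnt_le {a b d : ℝ} (ha : 0 < a) (hab : a ≤ b) (hb : a + b ≤ 1)
    (hd : d ∈ Set.Icc (b - a) (b + a)) :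
    a * binEnt (1 / 2 + (b - d) / (2 * a))
        + (1 - a) * binEnt (1 / 2 + (d - (1 - b)) / (2 * (1 - a)))
      ≤ binEnt b - 2 / log 2 * (d - pstar a b) ^ 2 := by
  obtain ⟨hd₁, hd₂⟩ := hd
  have ha₁ : 0 < 1 - a := by linarith
  set u := 1 / 2 + (b - d) / (2 * a) with hu_def
  set v := 1 / 2 + (d - (1 - b)) / (2 * (1 - a)) with hv_def
  have hu : u ∈ Set.Icc 0 1 := by
    rw [show u = (a + b - d) / (2 * a) by rw [hu_def]; field_simp; ring]
    exact ⟨by apply div_nonneg <;> linarith, by rw [div_le_one (by positivity)]; linarith⟩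
  have hv : v ∈ Set.Icc 0 1 := by
    rw [show v = (d + b - a) / (2 * (1 - a)) by rw [hv_def]; field_simp; ring]
    exact ⟨by apply div_nonneg <;> linarith, by rw [div_le_one (by positivity)]; linarith⟩
  have hmix : a * u + (1 - a) * v = b := by rw [hu_def, hv_def]; field_simp; ring
  -- `u - v = (pstar a b - d) / (2a(1-a))`, and `4a(1-a) ≤ 1`
  have hgap : (d - pstar a b) ^ 2 ≤ a * (1 - a) * (u - v) ^ 2 := by
    rw [show a * (1 - a) * (u - v) ^ 2 = (d - pstar a b) ^ 2 / (4 * (a * (1 - a))) by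
      rw [hu_def, hv_def]; unfold pstar; field_simp; ring, le_div_iff₀ (by positivity)]
    nlinarith [sq_nonneg (d - pstar a b), sq_nonneg (1 - 2 * a)]
  have hconc := strongConcaveOn_binEnt.2 hu hv ha.le ha₁.le (by ring)
  simp only [smul_eq_mul, hmix, norm_eq_abs, sq_abs] at hconc
  have hlog : 0 < log 2 := log_pos one_lt_two
  have : 2 / log 2 * (d - pstar a b) ^ 2 ≤ a * (1 - a) * (4 / log 2 / 2 * (u - v) ^ 2) := by
    rw [show a * (1 - a) * (4 / log 2 / 2 * (u - v) ^ 2)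
      = 2 / log 2 * (a * (1 - a) * (u - v) ^ 2) by ring]
    gcongr
  linarith

section exponent

variable {α β : ℝ}

lemma wd_le_sub_sq (hα : 0 < α) (hαβ : α ≤ β) {d : ℝ}
    (hd : d ∈ Set.Icc (binEntInv β - binEntInv α) (binEntInv β + binEntInv α)) :
    wd α β d ≤ α + β - 2 / log 2 * (d - pstar (binEntInv α) (binEntInv β)) ^ 2 := by
  obtain ⟨⟨-, ha⟩, -⟩ := binEntInv_mem hα.le
  obtain ⟨⟨-, hb⟩, hbβ⟩ := binEntInv_mem (hα.le.trans hαβ)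
  have := mul_binEnt_add_one_sub_mul_binEnt_le (binEntInv_pos hα) (binEntInv_mono hα.le hαβ)
    (by linarith) hd
  rw [wd]
  linarith

lemma sSup_wd_add_mul_le (hα : 0 < α) (hαβ : α ≤ β) (t : ℝ) :
    sSup ((fun d : ℝ => wd α β d + d * t) ''
        Set.Icc (binEntInv β - binEntInv α) (binEntInv β + binEntInv α))
      ≤ α + β + pstar (binEntInv α) (binEntInv β) * t + log 2 / 8 * t ^ 2 := by
  refine csSup_le ((Set.nonempty_Icc.2 (by linarith [binEntInv_pos hα])).image _) ?_
  rintro _ ⟨d, hd, rfl⟩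
  set p := pstar (binEntInv α) (binEntInv β)
  have hlog : 0 < log 2 := log_pos one_lt_two
  have hamgm : (d - p) * t ≤ 2 / log 2 * (d - p) ^ 2 + log 2 / 8 * t ^ 2 := by
    have hsq : 0 ≤ (4 * (d - p) - log 2 * t) ^ 2 / (8 * log 2) := by positivity
    rw [show (4 * (d - p) - log 2 * t) ^ 2 / (8 * log 2)
      = 2 / log 2 * (d - p) ^ 2 + log 2 / 8 * t ^ 2 - (d - p) * t by field_simp; ring] at hsq
    linarith
  linarith [wd_le_sub_sq hα hαβ hd]

end exponent

lemma log_one_sub_bounds {ρ : ℝ} (h₀ : 0 < ρ) (h₁ : ρ ≤ 1 / 2) :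
    ρ ≤ -log (1 - ρ) ∧ -log (1 - ρ) ≤ 2 * ρ := by
  have hρ : 0 < 1 - ρ := by linarith
  refine ⟨by linarith [log_le_sub_one_of_pos hρ], ?_⟩
  have hinv : (1 - ρ)⁻¹ ≤ 1 + 2 * ρ := by
    rw [inv_le_iff_one_le_mul₀ hρ]
    nlinarith
  linarith [one_sub_inv_le_log_of_pos hρ]

lemma exponent_lower_bound {α β : ℝ} (hα : 0 < α) (hαβ : α ≤ β) {ρ : ℝ}
    (hρ : ρ ∈ Set.Ioo (0 : ℝ) (1 / 2)) :
    (1 - α) + (1 - β)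
        + ρ * logb 2 (exp 1) * (1 - 2 * pstar (binEntInv α) (binEntInv β)) - 2 / log 2 * ρ ^ 2
      ≤ 2 - logb 2 (1 - ρ)
        - sSup ((fun d : ℝ => wd α β d + d * logb 2 ((1 + ρ) / (1 - ρ))) ''
            Set.Icc (binEntInv β - binEntInv α) (binEntInv β + binEntInv α)) := by
  obtain ⟨h₀, h₁⟩ := hρ
  have hlog : 0 < log 2 := log_pos one_lt_two
  set p := pstar (binEntInv α) (binEntInv β)
  set t := logb 2 ((1 + ρ) / (1 - ρ)) with ht
  have hS := sSup_wd_add_mul_le hα hαβ t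
  rw [logb, log_div (by linarith) (by linarith)] at ht
  obtain ⟨hp₀, hp₁⟩ := pstar_mem_Icc
    (Set.Icc_subset_Icc_right (by norm_num) (binEntInv_mem hα.le).1)
    (Set.Icc_subset_Icc_right (by norm_num) (binEntInv_mem (hα.le.trans hαβ)).1)
  obtain ⟨hA₁, hA₂⟩ := log_one_sub_bounds h₀ h₁.le
  have hB₀ : 0 ≤ log (1 + ρ) := log_nonneg (by linarith)
  have hB₁ : log (1 + ρ) ≤ ρ := by linarith [log_le_sub_one_of_pos (by linarith : 0 < 1 + ρ)]
  -- with `A = -log (1 - ρ)`, `B = log (1 + ρ)`: `p (A + B - 2ρ) ≤ A - ρ` as `B ≤ ρ ≤ A`,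
  -- and `(A + B)² ≤ 9ρ²`
  have key : p * (log (1 + ρ) - log (1 - ρ) - 2 * ρ) + (log (1 + ρ) - log (1 - ρ)) ^ 2 / 8
      ≤ -log (1 - ρ) - ρ + 2 * ρ ^ 2 := by
    nlinarith [mul_nonneg (sub_nonneg.2 hp₁) (sub_nonneg.2 hA₁), mul_nonneg hp₀ (sub_nonneg.2 hB₁)]
  suffices h : (1 - α) + (1 - β) + ρ * (1 / log 2) * (1 - 2 * p) - 2 / log 2 * ρ ^ 2
      ≤ 2 - log (1 - ρ) / log 2 - (α + β + p * t + log 2 / 8 * t ^ 2) by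
    rw [logb, logb, log_exp]
    linarith
  rw [ht, ← sub_nonneg]
  refine (div_nonneg (sub_nonneg.2 key) hlog.le).trans_eq ?_
  field_simp
  ring

theorem stmt_5_general (α β : ℝ) (hα : 0 < α) (hαβ : α ≤ β) :
    ∃ e : ℝ → ℝ, (e =o[nhdsWithin 0 (Set.Ioi 0)] fun ρ : ℝ => ρ) ∧
      ∃ δ : ℝ, 0 < δ ∧ ∀ ρ ∈ Set.Ioo (0:ℝ) δ,
        2 - Real.logb 2 (1 - ρ)
          - sSup ((fun d : ℝ => wd α β d + d * Real.logb 2 ((1 + ρ)/(1 - ρ))) ''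
              Set.Icc (binEntInv β - binEntInv α) (binEntInv β + binEntInv α))
        ≥ (1 - α) + (1 - β)
          + ρ * Real.logb 2 (Real.exp 1) * (1 - 2 * pstar (binEntInv α) (binEntInv β))
          + e ρ := by
  refine ⟨fun ρ => -(2 / log 2 * ρ ^ 2), ?_, 1 / 2, by norm_num, fun ρ hρ => ?_⟩
  · exact ((isLittleO_pow_id one_lt_two).const_mul_left _).neg_left.mono nhdsWithin_le_nhds
  · linarith [exponent_lower_bound hα hαβ hρ]

/-- lower bound for the anti-concentric spherical exponent as `ρ → 0⁺`. -/
theorem stmt_5 (α β : ℝ) (hα : 0 < α) (hαβ : α ≤ β) (hβ : β < 1) :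
    ∃ e : ℝ → ℝ, (e =o[nhdsWithin 0 (Set.Ioi 0)] fun ρ : ℝ => ρ) ∧
      ∃ δ : ℝ, 0 < δ ∧ ∀ ρ ∈ Set.Ioo (0:ℝ) δ,
        2 - Real.logb 2 (1 - ρ)
          - sSup ((fun d : ℝ => wd α β d + d * Real.logb 2 ((1 + ρ)/(1 - ρ))) ''
              Set.Icc (binEntInv β - binEntInv α) (binEntInv β + binEntInv α))
        ≥ (1 - α) + (1 - β)
          + ρ * Real.logb 2 (Real.exp 1) * (1 - 2 * pstar (binEntInv α) (binEntInv β))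
          + e ρ :=
  stmt_5_general α β hα hαβ
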